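/- arXiv:2004.03730 — 2 statements merged into one kernel-verified Lean document; each statement's English description precedes it below -/
import Mathlib

section
/- Let σ: ℝ → ℝ₊ be locally Lipschitz and let T be a compact set of positive Lebesgue measure. Given r > 0 and measurable y, y': D × T → ℝ with ‖y‖_{L^∞}, ‖y'‖_{L^∞} < r, define (P_σ y)(x,t) = σ(y(x,t)) / ∫_T σ(y(x,t')) dt'. Then there exists ε(r) > 0 such that ε(r) ≤ P_σ y, P_σ y' ≤ ε(r)^{-1}, and there exists C_σ(r) such that ‖P_σ y − P_σ y'‖_{L²(D;L²(T))} ≤ C_σ(r) ‖y − y'‖_{L²(D;L²(T))}. -/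
/-!
On the compact range `[-r, r]` of the data, `σ` takes values in some `[m, M] ⊂ (0, ∞)` and is
`L`-Lipschitz, so `∫_T σ(y(x,·))` lies in `[m |T|, M |T|]`; this gives the two-sided bounds.
For the Lipschitz estimate write, with `u = σ ∘ y(x,·)`, `v = σ ∘ y'(x,·)`, `I = ∫_T u` and
`J = ∫_T v`, `u / I - v / J = (u - v) / I + v (J - I) / (I J)`. The first term is controlled
pointwise by `L |y - y'|`, the second by Cauchy–Schwarz, `|J - I| ≤ |T|^{1/2} ‖u - v‖_{L²(T)}`.
This bounds `‖P_σ y - P_σ y'‖_{L²(T)}` fibrewise in `x`; integrating over `D` gives the claim.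
-/

open MeasureTheory

/-- The normalization operator `P_σ`: `(P_σ y)(x,t) = σ(y(x,t)) / ∫_T σ(y(x,t')) dt'`. -/
noncomputable def Psig {D : Type*} {p : ℕ} (T : Set (EuclideanSpace ℝ (Fin p)))
    (σ : ℝ → ℝ) (y : D → EuclideanSpace ℝ (Fin p) → ℝ)
    (x : D) (t : EuclideanSpace ℝ (Fin p)) : ℝ :=
  σ (y x t) / ∫ t' in T, σ (y x t')

open Set Metric

lemma IsCompact.exists_mapsTo_Icc_of_pos {X : Type*} [TopologicalSpace X] {K : Set X}
    (hK : IsCompact K) {σ : X → ℝ} (hσ : ContinuousOn σ K) (hpos : ∀ s ∈ K, 0 < σ s) :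
    ∃ m M, 0 < m ∧ m ≤ M ∧ MapsTo σ K (Icc m M) := by
  rcases K.eq_empty_or_nonempty with rfl | hne
  · exact ⟨1, 1, one_pos, le_rfl, mapsTo_empty _ _⟩
  obtain ⟨a, ha, hmin⟩ := hK.exists_isMinOn hne hσ
  obtain ⟨b, hb, hmax⟩ := hK.exists_isMaxOn hne hσ
  exact ⟨σ a, σ b, hpos a ha, hmin hb, fun s hs => ⟨hmin hs, hmax hs⟩⟩

lemma exists_pos_Icc_subset_Icc_inv {a b : ℝ} (ha : 0 < a) (hb : 0 < b) :
    ∃ ε > 0, Icc a b ⊆ Icc ε ε⁻¹ :=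
  ⟨min a b⁻¹, by positivity, Icc_subset_Icc (min_le_left _ _)
    (le_inv_of_le_inv₀ (by positivity) (min_le_right _ _))⟩

lemma sq_sub_le_diam_sq {K : Set ℝ} (hK : Bornology.IsBounded K) {a b : ℝ} (ha : a ∈ K)
    (hb : b ∈ K) : (a - b) ^ 2 ≤ diam K ^ 2 := by
  rw [← sq_abs, ← Real.dist_eq]
  exact pow_le_pow_left₀ dist_nonneg (dist_le_diam_of_mem hK ha hb) 2

lemma sq_div_sub_div_le {u v I J c M : ℝ} (hc : 0 < c) (hI : c ≤ I) (hJ : c ≤ J)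
    (hv : |v| ≤ M) :
    (u / I - v / J) ^ 2 ≤ 2 / c ^ 2 * (u - v) ^ 2 + 2 * M ^ 2 * (I - J) ^ 2 / c ^ 4 := by
  have hI0 : 0 < I := hc.trans_le hI
  have hJ0 : 0 < J := hc.trans_le hJ
  set A := (u - v) / I
  set B := v * (J - I) / (I * J)
  have hsplit : u / I - v / J = A + B := by
    simp only [A, B]; field_simp; ring
  have hA : A ^ 2 ≤ (u - v) ^ 2 / c ^ 2 := by
    simp only [A]; rw [div_pow]; gcongr
  have hB : B ^ 2 ≤ M ^ 2 * (I - J) ^ 2 / c ^ 4 := by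
    have hv2 : v ^ 2 ≤ M ^ 2 := sq_le_sq.2 (hv.trans (le_abs_self M))
    simp only [B]
    rw [div_pow, mul_pow, mul_pow, show c ^ 4 = c ^ 2 * c ^ 2 by ring, ← neg_sub, neg_sq]
    gcongr
  calc (u / I - v / J) ^ 2 ≤ 2 * A ^ 2 + 2 * B ^ 2 := by
        rw [hsplit]; nlinarith [sq_nonneg (A - B)]
    _ ≤ 2 * ((u - v) ^ 2 / c ^ 2) + 2 * (M ^ 2 * (I - J) ^ 2 / c ^ 4) := by gcongr
    _ = 2 / c ^ 2 * (u - v) ^ 2 + 2 * M ^ 2 * (I - J) ^ 2 / c ^ 4 := by ring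

section Normalization

variable {α : Type*} [MeasurableSpace α] {μ : Measure α} [IsFiniteMeasure μ]

lemma sq_integral_le_measureReal_univ_mul_integral_sq {w : α → ℝ} (hw : MemLp w 2 μ) :
    (∫ a, w a ∂μ) ^ 2 ≤ μ.real univ * ∫ a, w a ^ 2 ∂μ := by
  have holder := integral_mul_le_Lp_mul_Lq_of_nonneg Real.HolderConjugate.two_two
    (f := fun a => |w a|) (g := fun _ => (1 : ℝ)) (ae_of_all _ fun a => abs_nonneg _)
    (ae_of_all _ fun _ => zero_le_one) (by rw [ENNReal.ofReal_ofNat]; exact hw.abs)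
    (by rw [ENNReal.ofReal_ofNat]; exact memLp_const 1)
  simp only [mul_one, one_pow, integral_const, smul_eq_mul, sq_abs, Real.rpow_two,
    ← Real.sqrt_eq_rpow] at holder
  calc (∫ a, w a ∂μ) ^ 2 ≤ (∫ a, |w a| ∂μ) ^ 2 := by
        rw [← sq_abs]; gcongr; exact abs_integral_le_integral_abs
    _ ≤ (√(∫ a, w a ^ 2 ∂μ) * √(μ.real univ)) ^ 2 := by gcongr
    _ = μ.real univ * ∫ a, w a ^ 2 ∂μ := by
        rw [mul_pow, Real.sq_sqrt (integral_nonneg fun a => sq_nonneg _),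
          Real.sq_sqrt measureReal_nonneg, mul_comm]

variable {u v : α → ℝ} {m M : ℝ}

lemma integral_mem_Icc_of_forall_mem_Icc (hu : Integrable u μ) (huI : ∀ a, u a ∈ Icc m M) :
    ∫ a, u a ∂μ ∈ Icc (m * μ.real univ) (M * μ.real univ) := by
  constructor
  · simpa [mul_comm] using integral_mono (integrable_const m) hu fun a => (huI a).1
  · simpa [mul_comm] using integral_mono hu (integrable_const M) fun a => (huI a).2

variable [NeZero μ]

lemma div_integral_mem_Icc (hm : 0 < m) (hu : Integrable u μ) (huI : ∀ a, u a ∈ Icc m M)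
    (a : α) : u a / ∫ b, u b ∂μ ∈ Icc (m / (M * μ.real univ)) (M / (m * μ.real univ)) := by
  have hτ : 0 < μ.real univ := measureReal_univ_pos
  obtain ⟨hlo, hhi⟩ := integral_mem_Icc_of_forall_mem_Icc hu huI
  have hM : 0 < M := hm.trans_le ((huI a).1.trans (huI a).2)
  exact ⟨div_le_div₀ (hm.trans_le (huI a).1).le (huI a).1 ((mul_pos hm hτ).trans_le hlo)
    hhi, div_le_div₀ hM.le (huI a).2 (mul_pos hm hτ) hlo⟩

lemma integral_sq_div_integral_sub_le (hm : 0 < m) (hu : Integrable u μ)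
    (hv : Integrable v μ) (huI : ∀ a, u a ∈ Icc m M) (hvI : ∀ a, v a ∈ Icc m M) :
    ∫ a, (u a / ∫ b, u b ∂μ - v a / ∫ b, v b ∂μ) ^ 2 ∂μ
      ≤ 2 * (1 + (M / m) ^ 2) / (m * μ.real univ) ^ 2 * ∫ a, (u a - v a) ^ 2 ∂μ := by
  set τ := μ.real univ
  set I := ∫ b, u b ∂μ
  set J := ∫ b, v b ∂μ
  set S := ∫ a, (u a - v a) ^ 2 ∂μ
  have hτ : 0 < τ := measureReal_univ_pos
  have hc : 0 < m * τ := mul_pos hm hτ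
  have hbound : ∀ a, |v a| ≤ M := fun a =>
    abs_le.2 ⟨by linarith [(hvI a).1, (hvI a).2], (hvI a).2⟩
  have huv2 : Integrable (fun a => (u a - v a) ^ 2) μ := by
    refine .of_bound ((hu.sub hv).aestronglyMeasurable.pow 2) ((M - m) ^ 2)
      (ae_of_all _ fun a => ?_)
    rw [Real.norm_of_nonneg (sq_nonneg _), ← sq_abs, ← Real.dist_eq]
    exact pow_le_pow_left₀ dist_nonneg (Real.dist_le_of_mem_Icc (huI a) (hvI a)) 2
  have hIJ : (I - J) ^ 2 ≤ τ * S := by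
    rw [← integral_sub hu hv]
    exact sq_integral_le_measureReal_univ_mul_integral_sq
      ((memLp_two_iff_integrable_sq (hu.sub hv).aestronglyMeasurable).2 huv2)
  have hpt : ∀ a, (u a / I - v a / J) ^ 2
      ≤ 2 / (m * τ) ^ 2 * (u a - v a) ^ 2 + 2 * M ^ 2 * (I - J) ^ 2 / (m * τ) ^ 4 :=
    fun a => sq_div_sub_div_le hc (integral_mem_Icc_of_forall_mem_Icc hu huI).1
      (integral_mem_Icc_of_forall_mem_Icc hv hvI).1 (hbound a)
  calc ∫ a, (u a / I - v a / J) ^ 2 ∂μ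
      ≤ ∫ a, (2 / (m * τ) ^ 2 * (u a - v a) ^ 2 + 2 * M ^ 2 * (I - J) ^ 2 / (m * τ) ^ 4) ∂μ :=
        integral_mono_of_nonneg (ae_of_all _ fun a => sq_nonneg _)
          ((huv2.const_mul _).add (integrable_const _)) (ae_of_all _ hpt)
    _ = 2 / (m * τ) ^ 2 * S + τ * (2 * M ^ 2 * (I - J) ^ 2 / (m * τ) ^ 4) := by
        rw [integral_add (huv2.const_mul _) (integrable_const _), integral_const_mul,
          integral_const, smul_eq_mul]
    _ ≤ 2 / (m * τ) ^ 2 * S + τ * (2 * M ^ 2 * (τ * S) / (m * τ) ^ 4) := by gcongr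
    _ = 2 * (1 + (M / m) ^ 2) / (m * τ) ^ 2 * S := by field_simp

end Normalization

section Composition

variable {α : Type*} [MeasurableSpace α] {μ : Measure α} [IsFiniteMeasure μ]
  {σ : ℝ → ℝ} {K : Set ℝ} {m M : ℝ} {f g : α → ℝ}

lemma integrable_comp_of_mapsTo (hσ : Measurable σ) (hσK : MapsTo σ K (Icc m M))
    (hf : Measurable f) (hfK : ∀ a, f a ∈ K) : Integrable (fun a => σ (f a)) μ :=
  .of_bound (hσ.comp hf).aestronglyMeasurable (max |m| |M|)
    (ae_of_all _ fun a => abs_le_max_abs_abs (hσK (hfK a)).1 (hσK (hfK a)).2)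

lemma integral_sq_comp_sub_le {L : NNReal} (hσL : LipschitzOnWith L σ K)
    (hK : Bornology.IsBounded K) (hf : Measurable f) (hg : Measurable g) (hfK : ∀ a, f a ∈ K)
    (hgK : ∀ a, g a ∈ K) :
    ∫ a, (σ (f a) - σ (g a)) ^ 2 ∂μ ≤ L ^ 2 * ∫ a, (f a - g a) ^ 2 ∂μ := by
  have hfg : Integrable (fun a => (f a - g a) ^ 2) μ :=
    .of_bound ((hf.sub hg).pow_const 2).aestronglyMeasurable (diam K ^ 2)
      (ae_of_all _ fun a => by
        rw [Real.norm_of_nonneg (sq_nonneg _)]; exact sq_sub_le_diam_sq hK (hfK a) (hgK a))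
  rw [← integral_const_mul]
  refine integral_mono_of_nonneg (ae_of_all _ fun a => sq_nonneg _) (hfg.const_mul _)
    (ae_of_all _ fun a => ?_)
  calc (σ (f a) - σ (g a)) ^ 2 = dist (σ (f a)) (σ (g a)) ^ 2 := by rw [Real.dist_eq, sq_abs]
    _ ≤ (L * dist (f a) (g a)) ^ 2 := by gcongr; exact hσL.dist_le_mul _ (hfK a) _ (hgK a)
    _ = L ^ 2 * (f a - g a) ^ 2 := by rw [mul_pow, Real.dist_eq, sq_abs]

variable [NeZero μ]

lemma comp_div_integral_mem_Icc (hσ : Measurable σ) (hσK : MapsTo σ K (Icc m M)) (hm : 0 < m)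
    (hf : Measurable f) (hfK : ∀ a, f a ∈ K) (a : α) :
    σ (f a) / ∫ b, σ (f b) ∂μ ∈ Icc (m / (M * μ.real univ)) (M / (m * μ.real univ)) :=
  div_integral_mem_Icc hm (integrable_comp_of_mapsTo hσ hσK hf hfK) (fun b => hσK (hfK b)) a

lemma integral_sq_comp_div_integral_sub_le {L : NNReal} (hσ : Measurable σ)
    (hσK : MapsTo σ K (Icc m M)) (hσL : LipschitzOnWith L σ K) (hK : Bornology.IsBounded K)
    (hm : 0 < m) (hf : Measurable f) (hg : Measurable g) (hfK : ∀ a, f a ∈ K)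
    (hgK : ∀ a, g a ∈ K) :
    ∫ a, (σ (f a) / ∫ b, σ (f b) ∂μ - σ (g a) / ∫ b, σ (g b) ∂μ) ^ 2 ∂μ
      ≤ 2 * (1 + (M / m) ^ 2) / (m * μ.real univ) ^ 2 * L ^ 2 * ∫ a, (f a - g a) ^ 2 ∂μ := by
  rw [mul_assoc]
  refine (integral_sq_div_integral_sub_le hm (integrable_comp_of_mapsTo hσ hσK hf hfK)
    (integrable_comp_of_mapsTo hσ hσK hg hgK) (fun a => hσK (hfK a))
    (fun a => hσK (hgK a))).trans ?_
  gcongr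
  exact integral_sq_comp_sub_le hσL hK hf hg hfK hgK

end Composition

lemma integrable_integral_of_measurable_uncurry {α β : Type*} [MeasurableSpace α]
    [MeasurableSpace β] {μ : Measure α} {ν : Measure β} [IsFiniteMeasure μ] [IsFiniteMeasure ν]
    {F : α → β → ℝ} (hF : Measurable (Function.uncurry F)) {B : ℝ} (hB : ∀ x t, ‖F x t‖ ≤ B) :
    Integrable (fun x => ∫ t, F x t ∂ν) μ :=
  (Integrable.of_bound hF.aestronglyMeasurable B
    (ae_of_all _ fun z => hB z.1 z.2)).integral_prod_left

lemma sqrt_integral_le_of_le_mul {α : Type*} [MeasurableSpace α] {μ : Measure α}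
    {F G : α → ℝ} {c : ℝ} (hc : 0 ≤ c) (hF : ∀ x, 0 ≤ F x) (hG : Integrable G μ)
    (hFG : ∀ x, F x ≤ c * G x) : √(∫ x, F x ∂μ) ≤ √c * √(∫ x, G x ∂μ) := by
  rw [← Real.sqrt_mul hc, ← integral_const_mul]
  exact Real.sqrt_le_sqrt (integral_mono_of_nonneg (ae_of_all _ hF) (hG.const_mul c)
    (ae_of_all _ hFG))

theorem Psig_bounds_and_L2_lipschitz_general {p : ℕ} {D : Type*} [MeasurableSpace D]
    (lam : Measure D) [IsFiniteMeasure lam]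
    (T : Set (EuclideanSpace ℝ (Fin p))) (hTcomp : IsCompact T)
    (hTpos : 0 < volume T)
    (σ : ℝ → ℝ) (hσpos : ∀ s : ℝ, 0 < σ s) (hσlip : LocallyLipschitz σ)
    (r : ℝ)
    (y y' : D → EuclideanSpace ℝ (Fin p) → ℝ)
    (hym : Measurable (Function.uncurry y)) (hy'm : Measurable (Function.uncurry y'))
    (hy : ∀ x t, |y x t| < r) (hy' : ∀ x t, |y' x t| < r) :
    (∃ ε : ℝ, 0 < ε ∧ ∀ x : D, ∀ t ∈ T,
        (ε ≤ Psig T σ y x t ∧ Psig T σ y x t ≤ ε⁻¹) ∧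
        (ε ≤ Psig T σ y' x t ∧ Psig T σ y' x t ≤ ε⁻¹)) ∧
    (∃ C : ℝ, 0 < C ∧
      Real.sqrt (∫ x, (∫ t in T, (Psig T σ y x t - Psig T σ y' x t) ^ 2) ∂lam)
        ≤ C * Real.sqrt (∫ x, (∫ t in T, (y x t - y' x t) ^ 2) ∂lam)) := by
  have : IsFiniteMeasure (volume.restrict T) :=
    isFiniteMeasure_restrict.2 hTcomp.measure_lt_top.ne
  have : NeZero (volume T) := ⟨hTpos.ne'⟩
  have hτ : 0 < (volume.restrict T).real univ := measureReal_univ_pos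
  have hyK : ∀ x t, y x t ∈ Icc (-r) r := fun x t => abs_le.1 (hy x t).le
  have hy'K : ∀ x t, y' x t ∈ Icc (-r) r := fun x t => abs_le.1 (hy' x t).le
  have hσm : Measurable σ := hσlip.continuous.measurable
  obtain ⟨m, M, hm, hmM, hσK⟩ := isCompact_Icc.exists_mapsTo_Icc_of_pos
    hσlip.continuous.continuousOn fun s (_ : s ∈ Icc (-r) r) => hσpos s
  obtain ⟨L, hσL⟩ :=
    hσlip.locallyLipschitzOn.exists_lipschitzOnWith_of_compact (isCompact_Icc (a := -r) (b := r))
  obtain ⟨ε, hε, hIcc⟩ := exists_pos_Icc_subset_Icc_inv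
    (div_pos hm (mul_pos (hm.trans_le hmM) hτ)) (div_pos (hm.trans_le hmM) (mul_pos hm hτ))
  refine ⟨⟨ε, hε, fun x t _ => ⟨hIcc ?_, hIcc ?_⟩⟩, ?_⟩
  · exact comp_div_integral_mem_Icc hσm hσK hm hym.of_uncurry_left (hyK x) t
  · exact comp_div_integral_mem_Icc hσm hσK hm hy'm.of_uncurry_left (hy'K x) t
  have hG : Integrable (fun x => ∫ t in T, (y x t - y' x t) ^ 2) lam :=
    integrable_integral_of_measurable_uncurry ((hym.sub hy'm).pow_const 2) fun x t => by
      rw [Real.norm_of_nonneg (sq_nonneg _)]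
      exact sq_sub_le_diam_sq (isBounded_Icc (-r) r) (hyK x t) (hy'K x t)
  have hPsig x := integral_sq_comp_div_integral_sub_le (μ := volume.restrict T) hσm hσK hσL
    (isBounded_Icc (-r) r) hm hym.of_uncurry_left hy'm.of_uncurry_left (hyK x) (hy'K x)
  refine ⟨√(2 * (1 + (M / m) ^ 2) / (m * (volume.restrict T).real univ) ^ 2 * L ^ 2) + 1,
    by positivity, ?_⟩
  refine (sqrt_integral_le_of_le_mul (by positivity)
    (fun x => integral_nonneg fun t => sq_nonneg _) hG hPsig).trans ?_
  gcongr
  linarith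

/-- For locally Lipschitz positive `σ` and data bounded in `L^∞` by `r`, the normalized
functions `P_σ y`, `P_σ y'` are bounded between `ε(r)` and `ε(r)⁻¹`, and `P_σ` is
Lipschitz in `L²(D;L²(T))`. -/
theorem Psig_bounds_and_L2_lipschitz {p : ℕ} {D : Type*} [MeasurableSpace D]
    (lam : Measure D) [IsFiniteMeasure lam]
    (T : Set (EuclideanSpace ℝ (Fin p))) (hTcomp : IsCompact T) (hTm : MeasurableSet T)
    (hTpos : 0 < volume T)
    (σ : ℝ → ℝ) (hσpos : ∀ s : ℝ, 0 < σ s) (hσlip : LocallyLipschitz σ)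
    (r : ℝ) (hr : 0 < r)
    (y y' : D → EuclideanSpace ℝ (Fin p) → ℝ)
    (hym : Measurable (Function.uncurry y)) (hy'm : Measurable (Function.uncurry y'))
    (hy : ∀ x t, |y x t| < r) (hy' : ∀ x t, |y' x t| < r) :
    (∃ ε : ℝ, 0 < ε ∧ ∀ x : D, ∀ t ∈ T,
        (ε ≤ Psig T σ y x t ∧ Psig T σ y x t ≤ ε⁻¹) ∧
        (ε ≤ Psig T σ y' x t ∧ Psig T σ y' x t ≤ ε⁻¹)) ∧
    (∃ C : ℝ, 0 < C ∧
      Real.sqrt (∫ x, (∫ t in T, (Psig T σ y x t - Psig T σ y' x t) ^ 2) ∂lam)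
        ≤ C * Real.sqrt (∫ x, (∫ t in T, (y x t - y' x t) ^ 2) ∂lam)) :=
  Psig_bounds_and_L2_lipschitz_general lam T hTcomp hTpos σ hσpos hσlip r y y' hym hy'm hy hy'
end

section
/- Let Z, Z' > 0 satisfy Z, Z' ≥ c > 0, and let Φ, Φ': X → [0, ∞) be measurable with ∫ e^{−Φ} dπ₀ = Z, ∫ e^{−Φ'} dπ₀ = Z'. Then the Hellinger distance between π = Z^{-1} e^{−Φ} π₀ and π' = (Z')^{-1} e^{−Φ'} π₀ satisfies d_H(π, π')² ≤ (1/c) ∫_X (e^{−Φ(u)/2} − e^{−Φ'(u)/2})² π₀(du) + C |Z − Z'|² for a constant C depending only on c. -/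
/-!
With `f = e^{-Φ/2}` and `g = e^{-Φ'/2}` in `L²(π₀)` we have `‖f‖² = Z`, `‖g‖² = Z'`, and the
left-hand side is `‖f/‖f‖ - g/‖g‖‖²`. In any real inner product space
`‖x‖‖y‖ ‖x/‖x‖ - y/‖y‖‖² = 2‖x‖‖y‖ - 2⟪x,y⟫ ≤ ‖x‖² + ‖y‖² - 2⟪x,y⟫ = ‖x - y‖²`,
and `‖f‖‖g‖ = √(Z Z') ≥ c`. So the density term alone already bounds the distance and any
`C > 0` works.
-/

open MeasureTheory

theorem norm_mul_norm_mul_norm_inv_smul_sub_sq_le {E : Type*} [NormedAddCommGroup E]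
    [InnerProductSpace ℝ E] (x y : E) :
    ‖x‖ * ‖y‖ * ‖‖x‖⁻¹ • x - ‖y‖⁻¹ • y‖ ^ 2 ≤ ‖x - y‖ ^ 2 := by
  rcases eq_or_ne x 0 with rfl | hx
  · simp
  rcases eq_or_ne y 0 with rfl | hy
  · simp
  have hx' : ‖x‖ ≠ 0 := norm_ne_zero_iff.mpr hx
  have hy' : ‖y‖ ≠ 0 := norm_ne_zero_iff.mpr hy
  have hnormalized :
      ‖x‖ * ‖y‖ * ‖‖x‖⁻¹ • x - ‖y‖⁻¹ • y‖ ^ 2 = 2 * ‖x‖ * ‖y‖ - 2 * inner ℝ x y := by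
    rw [norm_sub_sq_real, inner_smul_left, inner_smul_right, norm_smul, norm_smul]
    simp only [norm_inv, norm_norm, RCLike.conj_to_real]
    field_simp
    ring
  rw [hnormalized, norm_sub_sq_real]
  linarith [two_mul_le_add_sq ‖x‖ ‖y‖]

namespace MeasureTheory

variable {α : Type*} [MeasurableSpace α] {μ : Measure α}

theorem MemLp.norm_toLp_sq_eq_integral_sq {f : α → ℝ} (hf : MemLp f 2 μ) :
    ‖hf.toLp f‖ ^ 2 = ∫ a, f a ^ 2 ∂μ := by
  rw [← real_inner_self_eq_norm_sq, L2.inner_def]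
  exact integral_congr_ae (hf.coeFn_toLp.mono fun a ha => by simp [ha, sq])

theorem MemLp.sqrt_integral_sq_mul_integral_inv_mul_sub_sq_le {f g : α → ℝ}
    (hf : MemLp f 2 μ) (hg : MemLp g 2 μ) :
    √(∫ a, f a ^ 2 ∂μ) * √(∫ a, g a ^ 2 ∂μ) *
        ∫ a, ((√(∫ a, f a ^ 2 ∂μ))⁻¹ * f a - (√(∫ a, g a ^ 2 ∂μ))⁻¹ * g a) ^ 2 ∂μ
      ≤ ∫ a, (f a - g a) ^ 2 ∂μ := by
  have hnorm_f : ‖hf.toLp f‖ = √(∫ a, f a ^ 2 ∂μ) := by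
    rw [← hf.norm_toLp_sq_eq_integral_sq, Real.sqrt_sq (norm_nonneg _)]
  have hnorm_g : ‖hg.toLp g‖ = √(∫ a, g a ^ 2 ∂μ) := by
    rw [← hg.norm_toLp_sq_eq_integral_sq, Real.sqrt_sq (norm_nonneg _)]
  have key := norm_mul_norm_mul_norm_inv_smul_sub_sq_le (hf.toLp f) (hg.toLp g)
  rw [hnorm_f, hnorm_g, ← MemLp.toLp_const_smul, ← MemLp.toLp_const_smul, ← MemLp.toLp_sub,
    ← MemLp.toLp_sub, MemLp.norm_toLp_sq_eq_integral_sq, MemLp.norm_toLp_sq_eq_integral_sq] at key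
  simpa only [Pi.sub_apply, Pi.smul_apply, smul_eq_mul] using key

theorem Integrable.memLp_two_sqrt {p : α → ℝ} (hp : Integrable p μ) (hp0 : 0 ≤ᵐ[μ] p) :
    MemLp (fun a => √(p a)) 2 μ := by
  refine (memLp_two_iff_integrable_sq
    (Real.continuous_sqrt.comp_aestronglyMeasurable hp.aestronglyMeasurable)).mpr ?_
  exact hp.congr (hp0.mono fun a ha => (Real.sq_sqrt ha).symm)

theorem sqrt_integral_mul_integral_sqrt_inv_mul_sub_sq_le {p q : α → ℝ}
    (hp : Integrable p μ) (hq : Integrable q μ) (hp0 : 0 ≤ᵐ[μ] p) (hq0 : 0 ≤ᵐ[μ] q) :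
    √(∫ a, p a ∂μ) * √(∫ a, q a ∂μ) *
        ∫ a, (√((∫ a, p a ∂μ)⁻¹ * p a) - √((∫ a, q a ∂μ)⁻¹ * q a)) ^ 2 ∂μ
      ≤ ∫ a, (√(p a) - √(q a)) ^ 2 ∂μ := by
  have hsq_p : ∫ a, √(p a) ^ 2 ∂μ = ∫ a, p a ∂μ :=
    integral_congr_ae (hp0.mono fun a ha => Real.sq_sqrt ha)
  have hsq_q : ∫ a, √(q a) ^ 2 ∂μ = ∫ a, q a ∂μ :=
    integral_congr_ae (hq0.mono fun a ha => Real.sq_sqrt ha)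
  have key := (hp.memLp_two_sqrt hp0).sqrt_integral_sq_mul_integral_inv_mul_sub_sq_le
    (hq.memLp_two_sqrt hq0)
  simp only [hsq_p, hsq_q] at key
  simpa only [Real.sqrt_mul (inv_nonneg.mpr (integral_nonneg_of_ae hp0)),
    Real.sqrt_mul (inv_nonneg.mpr (integral_nonneg_of_ae hq0)), Real.sqrt_inv] using key

end MeasureTheory

theorem hellinger_splitting_general {X : Type*} [MeasurableSpace X]
    (π₀ : Measure X)
    (Φ Φ' : X → ℝ)
    (Z Z' c : ℝ) (hc : 0 < c) (hZc : c ≤ Z) (hZ'c : c ≤ Z')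
    (hZ : Z = ∫ u, Real.exp (-Φ u) ∂π₀) (hZ' : Z' = ∫ u, Real.exp (-Φ' u) ∂π₀) :
    ∃ C > (0 : ℝ),
      (∫ u, (Real.sqrt (Z⁻¹ * Real.exp (-Φ u)) -
        Real.sqrt (Z'⁻¹ * Real.exp (-Φ' u))) ^ 2 ∂π₀)
      ≤ (1 / c) * (∫ u, (Real.exp (-Φ u / 2) - Real.exp (-Φ' u / 2)) ^ 2 ∂π₀)
        + C * |Z - Z'| ^ 2 := by
  refine ⟨1, one_pos, ?_⟩
  -- A non-integrable function has Bochner integral `0`, so `Z, Z' > 0` forces integrability.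
  have hint : Integrable (fun u => Real.exp (-Φ u)) π₀ :=
    .of_integral_ne_zero (hZ ▸ (hc.trans_le hZc).ne')
  have hint' : Integrable (fun u => Real.exp (-Φ' u)) π₀ :=
    .of_integral_ne_zero (hZ' ▸ (hc.trans_le hZ'c).ne')
  have hscaled := sqrt_integral_mul_integral_sqrt_inv_mul_sub_sq_le hint hint'
    (.of_forall fun u => (Real.exp_pos _).le) (.of_forall fun u => (Real.exp_pos _).le)
  rw [← hZ, ← hZ'] at hscaled
  have hc_le : c ≤ √Z * √Z' := by
    calc c = √c * √c := (Real.mul_self_sqrt hc.le).symm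
      _ ≤ √Z * √Z' := mul_le_mul (Real.sqrt_le_sqrt hZc) (Real.sqrt_le_sqrt hZ'c)
          (Real.sqrt_nonneg _) (Real.sqrt_nonneg _)
  have hnonneg : 0 ≤ ∫ u, (√(Z⁻¹ * Real.exp (-Φ u)) - √(Z'⁻¹ * Real.exp (-Φ' u))) ^ 2 ∂π₀ :=
    integral_nonneg fun u => sq_nonneg _
  simp_rw [Real.exp_half]
  refine le_add_of_le_of_nonneg ?_ (by positivity)
  rw [one_div, inv_mul_eq_div, le_div_iff₀' hc]
  exact (mul_le_mul_of_nonneg_right hc_le hnonneg).trans hscaled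

/-- Splitting the squared Hellinger distance between two tilted (Gibbs) measures into a
term comparing the unnormalized densities and a term comparing the normalization
constants: `d_H(π,π')² ≤ (1/c) ∫ (e^{−Φ/2} − e^{−Φ'/2})² dπ₀ + C |Z − Z'|²`. -/
theorem hellinger_splitting {X : Type*} [MeasurableSpace X]
    (π₀ : Measure X) [IsProbabilityMeasure π₀]
    (Φ Φ' : X → ℝ) (hΦm : Measurable Φ) (hΦ'm : Measurable Φ')
    (hΦ : ∀ u, 0 ≤ Φ u) (hΦ' : ∀ u, 0 ≤ Φ' u)
    (Z Z' c : ℝ) (hc : 0 < c) (hZc : c ≤ Z) (hZ'c : c ≤ Z')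
    (hZ : Z = ∫ u, Real.exp (-Φ u) ∂π₀) (hZ' : Z' = ∫ u, Real.exp (-Φ' u) ∂π₀) :
    ∃ C > (0 : ℝ),
      (∫ u, (Real.sqrt (Z⁻¹ * Real.exp (-Φ u)) -
        Real.sqrt (Z'⁻¹ * Real.exp (-Φ' u))) ^ 2 ∂π₀)
      ≤ (1 / c) * (∫ u, (Real.exp (-Φ u / 2) - Real.exp (-Φ' u / 2)) ^ 2 ∂π₀)
        + C * |Z - Z'| ^ 2 :=
  hellinger_splitting_general π₀ Φ Φ' Z Z' c hc hZc hZ'c hZ hZ'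
end
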